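/- arXiv:0801.0033 — 2 statements merged into one kernel-verified Lean document; each statement's English description precedes it below -/
import Mathlib

section
/- Let C be a category with coequalizers, let (R, r, ρ) and (T, t, τ) be monads on C with T preserving coequalizers, and let φ : R → T be a morphism of monads. Then the restriction functor φ* : T-Mod → R-Mod (given by (X, x) ↦ (X, x ∘ φX)) has a left adjoint φ*, where φ*(X, x) is the coequalizer in T-Mod of the parallel pair (tX ∘ TφX, Tx) : TRX ⇉ TX. -/
open CategoryTheory CategoryTheory.Limits

universe v u

/-! A `T`-algebra map `u : T X ⟶ Y` out of a free algebra is determined by its transpose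
`g : X ⟶ Y`, and `u` coequalizes the pair `T R X ⇉ T X` exactly when `g` is a map of
`R`-algebras `X ⟶ φ* Y`. So `T`-algebra maps out of the coequalizer correspond, naturally in
`Y`, to `R`-algebra maps into `φ* Y`. The coequalizer exists because `T` preserves
coequalizers, so that the forgetful functor creates them. -/

theorem CategoryTheory.Adjunction.homEquiv_map_comp_counit_comp {C D : Type*} [Category C]
    [Category D] {F : C ⥤ D} {G : D ⥤ C} (adj : F ⊣ G) {A : C} {Y Y' : D} (g : A ⟶ G.obj Y)
    (u : Y ⟶ Y') : adj.homEquiv _ _ ((F.map g ≫ adj.counit.app Y) ≫ u) = g ≫ G.map u := by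
  simp [homEquiv_unit]

namespace CategoryTheory.Monad

variable {C : Type u} [Category.{v} C]

instance hasCoequalizers_algebra [HasCoequalizers C] (T : Monad C)
    [PreservesColimitsOfShape WalkingParallelPair (T : C ⥤ C)] : HasCoequalizers T.Algebra :=
  hasColimitsOfShape_of_hasColimitsOfShape_createsColimitsOfShape (forget T)

variable {R T : Monad C} (φ : R ⟶ T)

def freeHomOfMonadHom (X : C) : T.free.obj (R.obj X) ⟶ T.free.obj X :=
  T.free.map (φ.app X) ≫ T.adj.counit.app (T.free.obj X)

theorem map_adj_homEquiv_comp_a {X : C} {Y : T.Algebra} (u : T.free.obj X ⟶ Y) :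
    T.map (T.adj.homEquiv _ _ u) ≫ Y.a = u.f := by
  simp only [Adjunction.homEquiv_unit, adj_unit, forget_map]
  -- `erw`: `(T.free.obj X).A` and `T.obj X` agree only after unfolding `free`.
  erw [Functor.map_comp, Category.assoc, u.h, T.right_unit_assoc]

theorem map_adj_homEquiv_comp_app_comp_a {X : C} {Y : T.Algebra} (u : T.free.obj X ⟶ Y) :
    R.map (T.adj.homEquiv _ _ u) ≫ φ.app Y.A ≫ Y.a = φ.app X ≫ u.f := by
  erw [φ.naturality_assoc, map_adj_homEquiv_comp_a]

theorem freeHomOfMonadHom_comp_eq_iff (X : R.Algebra) {Y : T.Algebra} (u : T.free.obj X.A ⟶ Y) :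
    freeHomOfMonadHom φ X.A ≫ u = T.free.map X.a ≫ u ↔
      R.map (T.adj.homEquiv _ _ u) ≫ ((algebraFunctorOfMonadHom φ).obj Y).a =
        X.a ≫ T.adj.homEquiv _ _ u := by
  have hfst : T.adj.homEquiv _ _ (freeHomOfMonadHom φ X.A ≫ u) = φ.app X.A ≫ u.f :=
    T.adj.homEquiv_map_comp_counit_comp (φ.app X.A) u
  have hR : R.map (T.adj.homEquiv _ _ u) ≫ ((algebraFunctorOfMonadHom φ).obj Y).a =
      φ.app X.A ≫ u.f :=
    map_adj_homEquiv_comp_app_comp_a φ u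
  rw [← (T.adj.homEquiv _ _).injective.eq_iff, hfst, T.adj.homEquiv_naturality_left, hR]
  exact Iff.rfl

def coequalizingHomEquiv (X : R.Algebra) (Y : T.Algebra) :
    { u : T.free.obj X.A ⟶ Y // freeHomOfMonadHom φ X.A ≫ u = T.free.map X.a ≫ u } ≃
      (X ⟶ (algebraFunctorOfMonadHom φ).obj Y) where
  toFun u := ⟨T.adj.homEquiv _ _ u.1, (freeHomOfMonadHom_comp_eq_iff φ X u.1).1 u.2⟩
  invFun g := ⟨(T.adj.homEquiv _ _).symm g.f,
    (freeHomOfMonadHom_comp_eq_iff φ X _).2 (by erw [Equiv.apply_symm_apply]; exact g.h)⟩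
  left_inv u := Subtype.ext ((T.adj.homEquiv _ _).symm_apply_apply u.1)
  right_inv g := Algebra.Hom.ext ((T.adj.homEquiv _ _).apply_symm_apply g.f)

variable [HasCoequalizers C] [PreservesColimitsOfShape WalkingParallelPair (T : C ⥤ C)]

noncomputable def extendScalarsHomEquiv (X : R.Algebra) (Y : T.Algebra) :
    (coequalizer (freeHomOfMonadHom φ X.A) (T.free.map X.a) ⟶ Y) ≃
      (X ⟶ (algebraFunctorOfMonadHom φ).obj Y) :=
  (Cofork.IsColimit.homIso (coequalizerIsCoequalizer _ _) Y).trans (coequalizingHomEquiv φ X Y)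

theorem extendScalarsHomEquiv_comp (X : R.Algebra) {Y Y' : T.Algebra}
    (u : coequalizer (freeHomOfMonadHom φ X.A) (T.free.map X.a) ⟶ Y) (g : Y ⟶ Y') :
    extendScalarsHomEquiv φ X Y' (u ≫ g) =
      extendScalarsHomEquiv φ X Y u ≫ (algebraFunctorOfMonadHom φ).map g := by
  ext
  simp only [extendScalarsHomEquiv, coequalizingHomEquiv, Equiv.trans_apply, Equiv.coe_fn_mk]
  rw [Cofork.IsColimit.homIso_natural, T.adj.homEquiv_naturality_right]
  rfl

noncomputable def extendScalars : R.Algebra ⥤ T.Algebra :=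
  Adjunction.leftAdjointOfEquiv (extendScalarsHomEquiv φ) fun X _ _ g u =>
    extendScalarsHomEquiv_comp φ X u g

noncomputable def extendScalarsAdjunction : extendScalars φ ⊣ algebraFunctorOfMonadHom φ :=
  Adjunction.adjunctionOfEquivLeft _ _

end CategoryTheory.Monad

/-- Let `C` have coequalizers, let `R`, `T` be monads on `C` with `T`
preserving coequalizers, and let `φ : R ⟶ T` be a morphism of monads.  Then the
restriction functor `φ* : T-Mod ⥤ R-Mod` (sending `(X, x)` to `(X, x ∘ φX)`, which is
`Monad.algebraFunctorOfMonadHom φ`) has a left adjoint `φ⁎`, whose value on an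
`R`-module `X` is the coequalizer in `T-Mod` of the parallel pair
`(tX ∘ TφX, Tx) : TRX ⇉ TX` (of morphisms of free `T`-modules). -/
theorem stmt3 {C : Type u} [Category.{v} C] [HasCoequalizers C] (R T : Monad C)
    [PreservesColimitsOfShape WalkingParallelPair (T : C ⥤ C)] (φ : R ⟶ T) :
    ∃ L : R.Algebra ⥤ T.Algebra,
      Nonempty (L ⊣ Monad.algebraFunctorOfMonadHom φ) ∧
      ∀ X : R.Algebra,
        ∃ (π : (Monad.free T).obj X.A ⟶ L.obj X)
          (w : ((Monad.free T).map (φ.app X.A) ≫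
              (Monad.adj T).counit.app ((Monad.free T).obj X.A)) ≫ π =
            (Monad.free T).map X.a ≫ π),
          Nonempty (IsColimit (Cofork.ofπ π w)) :=
  ⟨Monad.extendScalars φ, ⟨Monad.extendScalarsAdjunction φ⟩, fun _ =>
    ⟨coequalizer.π _ _, coequalizer.condition _ _, ⟨coequalizerIsCoequalizer _ _⟩⟩⟩
end

section
/- Let (M, C, T_o, T_i, Π, t, i) be an admissible septuple and (X, w) a transposition morphism for it. Then the cosimplex Z^n := Π T_o^{n+1} X (with cofaces T_o^k η_o T_o^{n-k} X and codegeneracies T_o^k μ_o T_o^{n-k} X applied under Π) is para-cocyclic, with para-cocyclic morphism w_n = Π T_o^n w ∘ Π T_o^{n-1} t X ∘ ⋯ ∘ Π t T_o^{n-1} X ∘ i T_o^n X. -/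
open CategoryTheory CategoryTheory.Limits

universe v u v₂ u₂ v₃ u₃

variable {C : Type u} [Category.{v} C]

/-- A distributive law `t : T_i T_o ⟶ T_o T_i` between two monads on `C` (the outer
monad of the domain is the first argument): a natural transformation with components
`T_i(T_o X) ⟶ T_o(T_i X)` satisfying the four Beck axioms. -/
structure DistLaw (R T : Monad C) where
  hom : (T : C ⥤ C) ⋙ (R : C ⥤ C) ⟶ (R : C ⥤ C) ⋙ (T : C ⥤ C)
  mul_left : ∀ X : C,
    R.μ.app ((T : C ⥤ C).obj X) ≫ hom.app X =
      (R : C ⥤ C).map (hom.app X) ≫ hom.app ((R : C ⥤ C).obj X) ≫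
        (T : C ⥤ C).map (R.μ.app X)
  mul_right : ∀ X : C,
    (R : C ⥤ C).map (T.μ.app X) ≫ hom.app X =
      hom.app ((T : C ⥤ C).obj X) ≫ (T : C ⥤ C).map (hom.app X) ≫
        T.μ.app ((R : C ⥤ C).obj X)
  unit_left : ∀ X : C,
    R.η.app ((T : C ⥤ C).obj X) ≫ hom.app X = (T : C ⥤ C).map (R.η.app X)
  unit_right : ∀ X : C,
    (R : C ⥤ C).map (T.η.app X) ≫ hom.app X = T.η.app ((R : C ⥤ C).obj X)

variable {M : Type u₂} [Category.{v₂} M] {D : Type u₃} [Category.{v₃} D]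

/-- Iterated composition power `T_o^n` of (the functor underlying) a monad. -/
def Tpow (To : Monad M) : ℕ → (M ⥤ M)
  | 0 => 𝟭 M
  | n + 1 => Tpow To n ⋙ (To : M ⥤ M)

/-- The coface `T_o^k η_o T_o^{n-k} : T_o^n ⟶ T_o^{n+1}`. -/
def coface (To : Monad M) : (n k : ℕ) → (Tpow To n ⟶ Tpow To (n + 1))
  | 0, _ =>
    { app := fun X => To.η.app X
      naturality := fun _ _ f => To.η.naturality f }
  | n + 1, 0 =>
    { app := fun X => To.η.app ((Tpow To (n + 1)).obj X)
      naturality := fun _ _ f => To.η.naturality ((Tpow To (n + 1)).map f) }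
  | n + 1, k + 1 => Functor.whiskerRight (coface To n k) (To : M ⥤ M)

/-- The codegeneracy `T_o^k μ_o T_o^{n-k} : T_o^{n+2} ⟶ T_o^{n+1}`. -/
def codeg (To : Monad M) : (n k : ℕ) → (Tpow To (n + 2) ⟶ Tpow To (n + 1))
  | n, 0 =>
    { app := fun X => To.μ.app ((Tpow To n).obj X)
      naturality := fun _ _ f => To.μ.naturality ((Tpow To n).map f) }
  | 0, _ + 1 =>
    { app := fun X => To.μ.app X
      naturality := fun _ _ f => To.μ.naturality f }
  | n + 1, k + 1 => Functor.whiskerRight (codeg To n k) (To : M ⥤ M)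

/-- The iterated shuffle
`T_o^{n-1} t ∘ ⋯ ∘ T_o t T_o^{n-2} ∘ t T_o^{n-1} : T_i T_o^n X ⟶ T_o^n T_i X`
built from a distributive law `t : T_i T_o ⟶ T_o T_i`. -/
def shuffle (Ti To : Monad M) (d : DistLaw Ti To) :
    (n : ℕ) → (X : M) →
      ((Ti : M ⥤ M).obj ((Tpow To n).obj X) ⟶ (Tpow To n).obj ((Ti : M ⥤ M).obj X))
  | 0, _ => 𝟙 _
  | n + 1, X => d.hom.app ((Tpow To n).obj X) ≫ (To : M ⥤ M).map (shuffle Ti To d n X)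

theorem powShift (To : Monad M) (n : ℕ) (X : M) :
    (Tpow To n).obj ((To : M ⥤ M).obj X) = (Tpow To (n + 1)).obj X := by
  induction n with
  | zero => rfl
  | succ n ih => exact congrArg (To : M ⥤ M).obj ih

section

variable (To Ti : Monad M) (d : DistLaw Ti To) (P : M ⥤ D) (X : M)

/-- The cosimplex `Z^n := Π T_o^{n+1} X` associated to a monad `T_o`, an object `X` and
a functor `Π`. -/
def Zob (n : ℕ) : D := P.obj ((Tpow To (n + 1)).obj X)

/-- The coface `Π (T_o^k η_o T_o^{n+1-k} X) : Z^n ⟶ Z^{n+1}`. -/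
def dmor (n k : ℕ) : Zob To P X n ⟶ Zob To P X (n + 1) :=
  P.map ((coface To (n + 1) k).app X)

/-- The codegeneracy `Π (T_o^k μ_o T_o^{n-k} X) : Z^{n+1} ⟶ Z^n`. -/
def smor (n k : ℕ) : Zob To P X (n + 1) ⟶ Zob To P X n :=
  P.map ((codeg To n k).app X)

/-- The candidate para-cocyclic operator
`w_n = Π T_o^n w ∘ Π T_o^{n-1} t X ∘ ⋯ ∘ Π t T_o^{n-1} X ∘ i T_o^n X : Z^n ⟶ Z^n`. -/
def wmor (i : (To : M ⥤ M) ⋙ P ⟶ (Ti : M ⥤ M) ⋙ P)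
    (w : (Ti : M ⥤ M).obj X ⟶ (To : M ⥤ M).obj X) (n : ℕ) :
    Zob To P X n ⟶ Zob To P X n :=
  i.app ((Tpow To n).obj X) ≫ P.map (shuffle Ti To d n X) ≫
    P.map ((Tpow To n).map w) ≫ eqToHom (congrArg P.obj (powShift To n X))

end

/-!
The cosimplicial identities are those of the standard cosimplicial object of the monad `T_o`:
each one is a unit, associativity or naturality law of `T_o`, pushed through `T_o^k`.

For the operators, write `w_n = Π τ_n ∘ i` with `τ_0 = w` and `τ_{n+1} = T_o τ_n ∘ t`. The
distributive-law axioms carry the transposition-morphism axioms of `w` along this recursion,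
giving `τ_n ∘ η_i = T_o^n η_o` and `τ_n ∘ μ_i = T_o^n μ_o ∘ τ_{n+1} ∘ T_i τ_n`; the
admissibility of `i` turns these into `w_{n+1} d_0 = d_{n+1}` and `w_n s_0 = s_n w_{n+1}^2`.
The other relations only use naturality of `i` and `t`.
-/

-- Lets `rw` see `(Tpow To (n + 1)).obj X` as `(Tpow To n ⋙ To).obj X` and `Zob` as `P.obj _`.
attribute [reducible] Tpow Zob

namespace CategoryTheory.Functor

variable {E : Type*} [Category E] (F : C ⥤ E) {W Y Y' Z : C}

theorem map_comp_map_eq_of_comp_eq {f : W ⟶ Y} {g : Y ⟶ Z} {f' : W ⟶ Y'} {g' : Y' ⟶ Z}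
    (h : f ≫ g = f' ≫ g') : F.map f ≫ F.map g = F.map f' ≫ F.map g' := by
  simp only [← F.map_comp, h]

theorem map_comp_map_eq_id_of_comp_eq_id {f : W ⟶ Y} {g : Y ⟶ W} (h : f ≫ g = 𝟙 W) :
    F.map f ≫ F.map g = 𝟙 (F.obj W) := by
  rw [← F.map_comp, h, F.map_id]

end CategoryTheory.Functor

theorem CategoryTheory.NatTrans.comp_functor_naturality {E E' : Type*} [Category E]
    [Category E'] {F F' : C ⥤ E} {G G' : E ⥤ E'} (α : F ⋙ G ⟶ F' ⋙ G') {X Y : C} (f : X ⟶ Y) :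
    G.map (F.map f) ≫ α.app Y = α.app X ≫ G'.map (F'.map f) :=
  α.naturality f

section Cosimplicial

variable (To : Monad M) (X : M)

lemma coface_zero_app (k : ℕ) : (coface To 0 k).app X = To.η.app X := rfl

lemma coface_outer_app (n : ℕ) : (coface To n 0).app X = To.η.app ((Tpow To n).obj X) := by
  cases n <;> rfl

lemma coface_succ_app (n k : ℕ) :
    (coface To (n + 1) (k + 1)).app X = (To : M ⥤ M).map ((coface To n k).app X) := rfl

lemma codeg_zero_app (k : ℕ) : (codeg To 0 k).app X = To.μ.app X := by
  cases k <;> rfl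

lemma codeg_outer_app (n : ℕ) : (codeg To n 0).app X = To.μ.app ((Tpow To n).obj X) := by
  cases n <;> rfl

lemma codeg_succ_app (n k : ℕ) :
    (codeg To (n + 1) (k + 1)).app X = (To : M ⥤ M).map ((codeg To n k).app X) := rfl

lemma coface_comp_coface : ∀ n j k : ℕ, j ≤ k → k ≤ n →
    (coface To n j).app X ≫ (coface To (n + 1) (k + 1)).app X =
      (coface To n k).app X ≫ (coface To (n + 1) j).app X
  | n, 0, k, _, _ => by
      rw [coface_outer_app, coface_outer_app, coface_succ_app]
      exact (To.η.naturality _).symm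
  | n + 1, j + 1, k + 1, hjk, hkn =>
      (To : M ⥤ M).map_comp_map_eq_of_comp_eq (coface_comp_coface n j k (by omega) (by omega))
  | 0, _ + 1, _, hjk, hkn => by omega
  | _ + 1, _ + 1, 0, hjk, _ => by omega

lemma codeg_comp_codeg : ∀ n j k : ℕ, j ≤ k → k ≤ n →
    (codeg To (n + 1) j).app X ≫ (codeg To n k).app X =
      (codeg To (n + 1) (k + 1)).app X ≫ (codeg To n j).app X
  | n, 0, 0, _, _ => by
      rw [codeg_outer_app, codeg_outer_app, codeg_succ_app, codeg_outer_app]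
      exact (To.assoc _).symm
  | n + 1, 0, k + 1, _, _ => by
      rw [codeg_outer_app, codeg_succ_app, codeg_succ_app, codeg_outer_app]
      exact (To.μ.naturality _).symm
  | n + 1, j + 1, k + 1, hjk, hkn =>
      (To : M ⥤ M).map_comp_map_eq_of_comp_eq (codeg_comp_codeg n j k (by omega) (by omega))
  | 0, 0, _ + 1, _, hkn => by omega
  | 0, _ + 1, _, hjk, hkn => by omega
  | _ + 1, _ + 1, 0, hjk, _ => by omega

lemma coface_comp_codeg_succ_of_le : ∀ n j k : ℕ, j ≤ k → k ≤ n →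
    (coface To (n + 2) j).app X ≫ (codeg To (n + 1) (k + 1)).app X =
      (codeg To n k).app X ≫ (coface To (n + 1) j).app X
  | n, 0, k, _, _ => by
      rw [coface_outer_app, coface_outer_app, codeg_succ_app]
      exact (To.η.naturality _).symm
  | n + 1, j + 1, k + 1, hjk, hkn =>
      (To : M ⥤ M).map_comp_map_eq_of_comp_eq
        (coface_comp_codeg_succ_of_le n j k (by omega) (by omega))
  | _, _ + 1, 0, hjk, _ => by omega
  | 0, _ + 1, _ + 1, _, hkn => by omega

lemma coface_succ_succ_comp_codeg_of_le : ∀ n j k : ℕ, k ≤ j → j ≤ n →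
    (coface To (n + 2) (j + 2)).app X ≫ (codeg To (n + 1) k).app X =
      (codeg To n k).app X ≫ (coface To (n + 1) (j + 1)).app X
  | n, j, 0, _, _ => by
      rw [codeg_outer_app, codeg_outer_app, coface_succ_app, coface_succ_app]
      exact To.μ.naturality _
  | n + 1, j + 1, k + 1, hkj, hjn =>
      (To : M ⥤ M).map_comp_map_eq_of_comp_eq
        (coface_succ_succ_comp_codeg_of_le n j k (by omega) (by omega))
  | _, 0, _ + 1, hkj, _ => by omega
  | 0, _ + 1, _ + 1, _, hjn => by omega

lemma coface_comp_codeg : ∀ n k : ℕ, (coface To (n + 1) k).app X ≫ (codeg To n k).app X = 𝟙 _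
  | n, 0 => by
      rw [coface_outer_app, codeg_outer_app]
      exact To.left_unit _
  | 0, k + 1 => by
      rw [coface_succ_app, coface_zero_app, codeg_zero_app]
      exact To.right_unit X
  | n + 1, k + 1 => (To : M ⥤ M).map_comp_map_eq_id_of_comp_eq_id (coface_comp_codeg n k)

lemma coface_succ_comp_codeg : ∀ n k : ℕ,
    (coface To (n + 1) (k + 1)).app X ≫ (codeg To n k).app X = 𝟙 _
  | 0, k => by
      rw [coface_succ_app, coface_zero_app, codeg_zero_app]
      exact To.right_unit X
  | n + 1, 0 => by
      rw [coface_succ_app, coface_outer_app, codeg_outer_app]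
      exact To.right_unit _
  | n + 1, k + 1 =>
      (To : M ⥤ M).map_comp_map_eq_id_of_comp_eq_id (coface_succ_comp_codeg n k)

end Cosimplicial

section Twist

variable (To Ti : Monad M) (d : DistLaw Ti To) (X : M)
  (w : (Ti : M ⥤ M).obj X ⟶ (To : M ⥤ M).obj X)

/-- `τ_n = T_o^n w ∘ T_o^{n-1} t X ∘ ⋯ ∘ t T_o^{n-1} X`, as in the header.
The recursion avoids the transport along `powShift` that `wmor` needs. -/
def twist : (n : ℕ) → ((Ti : M ⥤ M).obj ((Tpow To n).obj X) ⟶ (Tpow To (n + 1)).obj X)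
  | 0 => w
  | n + 1 => d.hom.app ((Tpow To n).obj X) ≫ (To : M ⥤ M).map (twist n)

lemma twist_succ (n : ℕ) : twist To Ti d X w (n + 1) =
    d.hom.app ((Tpow To n).obj X) ≫ (To : M ⥤ M).map (twist To Ti d X w n) := rfl

lemma map_coface_comp_twist : ∀ n k : ℕ, k ≤ n →
    (Ti : M ⥤ M).map ((coface To n k).app X) ≫ twist To Ti d X w (n + 1) =
      twist To Ti d X w n ≫ (coface To (n + 1) k).app X
  | n, 0, _ => by
      rw [coface_outer_app, coface_outer_app, twist_succ, ← Category.assoc, d.unit_right]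
      exact (To.η.naturality _).symm
  | n + 1, k + 1, hkn => by
      rw [coface_succ_app, coface_succ_app, twist_succ _ _ _ _ _ (n + 1),
        reassoc_of% d.hom.comp_functor_naturality, ← Functor.map_comp,
        map_coface_comp_twist n k (by omega), Functor.map_comp, twist_succ, Category.assoc]
  | 0, _ + 1, hkn => by omega

lemma unit_comp_twist (hw_unit : Ti.η.app X ≫ w = To.η.app X) :
    ∀ n : ℕ, Ti.η.app ((Tpow To n).obj X) ≫ twist To Ti d X w n = (coface To n n).app X
  | 0 => hw_unit
  | n + 1 => by
      dsimp only [Tpow, Functor.comp_obj]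
      rw [twist_succ, reassoc_of% d.unit_left, ← Functor.map_comp, unit_comp_twist hw_unit n,
        coface_succ_app]

lemma map_codeg_comp_twist : ∀ n k : ℕ, k ≤ n →
    (Ti : M ⥤ M).map ((codeg To n k).app X) ≫ twist To Ti d X w (n + 1) =
      twist To Ti d X w (n + 2) ≫ (codeg To (n + 1) k).app X
  | n, 0, _ => by
      rw [codeg_outer_app, codeg_outer_app, twist_succ, twist_succ, twist_succ, ← Category.assoc,
        d.mul_right, Category.assoc, Category.assoc, ← To.μ.naturality]
      simp only [Functor.comp_obj, Functor.comp_map, Functor.map_comp, Category.assoc]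
  | n + 1, k + 1, hkn => by
      rw [codeg_succ_app, codeg_succ_app, twist_succ _ _ _ _ _ (n + 1),
        reassoc_of% d.hom.comp_functor_naturality, ← Functor.map_comp,
        map_codeg_comp_twist n k (by omega), Functor.map_comp, twist_succ _ _ _ _ _ (n + 2),
        Category.assoc]
  | 0, _ + 1, hkn => by omega

lemma mul_comp_twist (hw_mul : Ti.μ.app X ≫ w =
      (Ti : M ⥤ M).map w ≫ d.hom.app X ≫ (To : M ⥤ M).map w ≫ To.μ.app X) :
    ∀ n : ℕ, Ti.μ.app ((Tpow To n).obj X) ≫ twist To Ti d X w n =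
      (Ti : M ⥤ M).map (twist To Ti d X w n) ≫ twist To Ti d X w (n + 1) ≫ (codeg To n n).app X
  | 0 => by
      rw [twist_succ, codeg_zero_app]
      simp only [Category.assoc]
      exact hw_mul
  | n + 1 => by
      dsimp only [Tpow, Functor.comp_obj]
      rw [twist_succ, reassoc_of% d.mul_left, ← Functor.map_comp, mul_comp_twist hw_mul n,
        twist_succ _ _ _ _ _ (n + 1), codeg_succ_app, twist_succ]
      simp only [Functor.map_comp, Category.assoc]
      rw [reassoc_of% d.hom.comp_functor_naturality]

lemma shuffle_comp_map_comp_eqToHom : ∀ n : ℕ,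
    shuffle Ti To d n X ≫ (Tpow To n).map w ≫ eqToHom (powShift To n X) = twist To Ti d X w n
  | 0 => by simp [shuffle, twist]
  | n + 1 => by
      rw [twist_succ, ← shuffle_comp_map_comp_eqToHom n]
      simp [shuffle, eqToHom_map]

end Twist

section Cosimplex

variable (To Ti : Monad M) (d : DistLaw Ti To) (P : M ⥤ D) (X : M)
  (i : (To : M ⥤ M) ⋙ P ⟶ (Ti : M ⥤ M) ⋙ P) (w : (Ti : M ⥤ M).obj X ⟶ (To : M ⥤ M).obj X)

lemma dmor_comp_dmor (n j k : ℕ) (hjk : j < k) (hkn : k ≤ n + 2) :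
    dmor To P X n j ≫ dmor To P X (n + 1) k = dmor To P X n (k - 1) ≫ dmor To P X (n + 1) j := by
  obtain ⟨k, rfl⟩ : ∃ k', k = k' + 1 := ⟨k - 1, by omega⟩
  exact P.map_comp_map_eq_of_comp_eq
    (coface_comp_coface To X (n + 1) j k (by omega) (by omega))

lemma smor_comp_smor (n j k : ℕ) (hjk : j ≤ k) (hkn : k ≤ n) :
    smor To P X (n + 1) j ≫ smor To P X n k = smor To P X (n + 1) (k + 1) ≫ smor To P X n j :=
  P.map_comp_map_eq_of_comp_eq (codeg_comp_codeg To X n j k hjk hkn)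

lemma dmor_comp_smor_of_lt (n j k : ℕ) (hjk : j < k) (hkn : k ≤ n + 1) :
    dmor To P X (n + 1) j ≫ smor To P X (n + 1) k = smor To P X n (k - 1) ≫ dmor To P X n j := by
  obtain ⟨k, rfl⟩ : ∃ k', k = k' + 1 := ⟨k - 1, by omega⟩
  exact P.map_comp_map_eq_of_comp_eq
    (coface_comp_codeg_succ_of_le To X n j k (by omega) (by omega))

lemma dmor_comp_smor (n k : ℕ) : dmor To P X (n + 1) k ≫ smor To P X (n + 1) k = 𝟙 _ :=
  P.map_comp_map_eq_id_of_comp_eq_id (coface_comp_codeg To X (n + 1) k)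

lemma dmor_succ_comp_smor (n k : ℕ) :
    dmor To P X (n + 1) (k + 1) ≫ smor To P X (n + 1) k = 𝟙 _ :=
  P.map_comp_map_eq_id_of_comp_eq_id (coface_succ_comp_codeg To X (n + 1) k)

lemma dmor_comp_smor_of_gt (n j k : ℕ) (hkj : k + 1 < j) (hjn : j ≤ n + 2) :
    dmor To P X (n + 1) j ≫ smor To P X (n + 1) k = smor To P X n k ≫ dmor To P X n (j - 1) := by
  obtain ⟨j, rfl⟩ : ∃ j', j = j' + 2 := ⟨j - 2, by omega⟩
  exact P.map_comp_map_eq_of_comp_eq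
    (coface_succ_succ_comp_codeg_of_le To X n j k (by omega) (by omega))

lemma wmor_eq (n : ℕ) :
    wmor To Ti d P X i w n = i.app ((Tpow To n).obj X) ≫ P.map (twist To Ti d X w n) := by
  rw [wmor, ← shuffle_comp_map_comp_eqToHom, P.map_comp, P.map_comp, eqToHom_map]

lemma dmor_comp_wmor (n j : ℕ) (hj : 1 ≤ j) (hjn : j ≤ n + 1) :
    dmor To P X n j ≫ wmor To Ti d P X i w (n + 1) =
      wmor To Ti d P X i w n ≫ dmor To P X n (j - 1) := by
  obtain ⟨j, rfl⟩ : ∃ j', j = j' + 1 := ⟨j - 1, by omega⟩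
  rw [wmor_eq, wmor_eq, dmor, dmor, coface_succ_app, Nat.add_sub_cancel,
    reassoc_of% i.comp_functor_naturality, ← P.map_comp,
    map_coface_comp_twist To Ti d X w n j (by omega), P.map_comp, Category.assoc]

lemma dmor_zero_comp_wmor (hi_unit : ∀ Y : M, P.map (To.η.app Y) ≫ i.app Y = P.map (Ti.η.app Y))
    (hw_unit : Ti.η.app X ≫ w = To.η.app X) (n : ℕ) :
    dmor To P X n 0 ≫ wmor To Ti d P X i w (n + 1) = dmor To P X n (n + 1) := by
  rw [wmor_eq, dmor, dmor, coface_outer_app, reassoc_of% hi_unit, ← P.map_comp,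
    unit_comp_twist To Ti d X w hw_unit]

lemma smor_comp_wmor (n j : ℕ) (hj : 1 ≤ j) (hjn : j ≤ n) :
    smor To P X n j ≫ wmor To Ti d P X i w n =
      wmor To Ti d P X i w (n + 1) ≫ smor To P X n (j - 1) := by
  obtain ⟨j, rfl⟩ : ∃ j', j = j' + 1 := ⟨j - 1, by omega⟩
  obtain ⟨n, rfl⟩ : ∃ n', n = n' + 1 := ⟨n - 1, by omega⟩
  rw [wmor_eq, wmor_eq, smor, smor, codeg_succ_app, Nat.add_sub_cancel,
    reassoc_of% i.comp_functor_naturality, ← P.map_comp,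
    map_codeg_comp_twist To Ti d X w n j (by omega), P.map_comp, Category.assoc]

lemma smor_zero_comp_wmor (hi_mul : ∀ Y : M,
      P.map (To.μ.app Y) ≫ i.app Y =
        i.app ((To : M ⥤ M).obj Y) ≫ P.map (d.hom.app Y) ≫
          i.app ((Ti : M ⥤ M).obj Y) ≫ P.map (Ti.μ.app Y))
    (hw_mul : Ti.μ.app X ≫ w =
      (Ti : M ⥤ M).map w ≫ d.hom.app X ≫ (To : M ⥤ M).map w ≫ To.μ.app X) (n : ℕ) :
    smor To P X n 0 ≫ wmor To Ti d P X i w n =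
      wmor To Ti d P X i w (n + 1) ≫ wmor To Ti d P X i w (n + 1) ≫ smor To P X n n := by
  rw [wmor_eq, wmor_eq, smor, smor, codeg_outer_app, reassoc_of% hi_mul, ← P.map_comp,
    mul_comp_twist To Ti d X w hw_mul, twist_succ]
  simp only [P.map_comp, Category.assoc]
  rw [reassoc_of% i.comp_functor_naturality]
  rfl

end Cosimplex

/-- Let `(M, C, T_o, T_i, Π, t, i)` be an admissible septuple (so
`T_o`, `T_i` are monads on `M`, `Π : M ⥤ C` is a functor, `t : T_i T_o ⟶ T_o T_i` is a
distributive law, and `i : Π T_o ⟶ Π T_i` is a natural transformation satisfying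
`i ∘ Π η_o = Π η_i` and `i ∘ Π μ_o = Π μ_i ∘ i T_i ∘ Π t ∘ i T_o`), and let `(X, w)` be
a transposition morphism (`w ∘ η_i X = η_o X` and
`w ∘ μ_i X = μ_o X ∘ T_o w ∘ t X ∘ T_i w`).  Then the cosimplex `Z^n := Π T_o^{n+1} X`,
with cofaces `Π (T_o^k η_o T_o^{n+1-k} X)` and codegeneracies
`Π (T_o^k μ_o T_o^{n-k} X)`, is para-cocyclic with para-cocyclic operator
`w_n := Π T_o^n w ∘ Π T_o^{n-1} t X ∘ ⋯ ∘ Π t T_o^{n-1} X ∘ i T_o^n X`: the cosimplicial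
identities hold and the operators `w_n` satisfy the para-cocyclic compatibility
relations with the cofaces and the codegeneracies. -/
theorem stmt19 (To Ti : Monad M) (d : DistLaw Ti To) (P : M ⥤ D)
    (i : (To : M ⥤ M) ⋙ P ⟶ (Ti : M ⥤ M) ⋙ P)
    (hi_unit : ∀ Y : M, P.map (To.η.app Y) ≫ i.app Y = P.map (Ti.η.app Y))
    (hi_mul : ∀ Y : M,
      P.map (To.μ.app Y) ≫ i.app Y =
        i.app ((To : M ⥤ M).obj Y) ≫ P.map (d.hom.app Y) ≫
          i.app ((Ti : M ⥤ M).obj Y) ≫ P.map (Ti.μ.app Y))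
    (X : M) (w : (Ti : M ⥤ M).obj X ⟶ (To : M ⥤ M).obj X)
    (hw_unit : Ti.η.app X ≫ w = To.η.app X)
    (hw_mul : Ti.μ.app X ≫ w =
      (Ti : M ⥤ M).map w ≫ d.hom.app X ≫ (To : M ⥤ M).map w ≫ To.μ.app X) :
    -- cosimplicial identities
    (∀ n j k : ℕ, j < k → k ≤ n + 2 →
      dmor To P X n j ≫ dmor To P X (n + 1) k =
        dmor To P X n (k - 1) ≫ dmor To P X (n + 1) j) ∧
    (∀ n j k : ℕ, j ≤ k → k ≤ n →
      smor To P X (n + 1) j ≫ smor To P X n k =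
        smor To P X (n + 1) (k + 1) ≫ smor To P X n j) ∧
    (∀ n j k : ℕ, j < k → k ≤ n + 1 →
      dmor To P X (n + 1) j ≫ smor To P X (n + 1) k =
        smor To P X n (k - 1) ≫ dmor To P X n j) ∧
    (∀ n k : ℕ, k ≤ n + 1 →
      dmor To P X (n + 1) k ≫ smor To P X (n + 1) k = 𝟙 _ ∧
      dmor To P X (n + 1) (k + 1) ≫ smor To P X (n + 1) k = 𝟙 _) ∧
    (∀ n j k : ℕ, k + 1 < j → j ≤ n + 2 →
      dmor To P X (n + 1) j ≫ smor To P X (n + 1) k =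
        smor To P X n k ≫ dmor To P X n (j - 1)) ∧
    -- para-cocyclic compatibility with the cofaces
    (∀ n j : ℕ, 1 ≤ j → j ≤ n + 1 →
      dmor To P X n j ≫ wmor To Ti d P X i w (n + 1) =
        wmor To Ti d P X i w n ≫ dmor To P X n (j - 1)) ∧
    (∀ n : ℕ,
      dmor To P X n 0 ≫ wmor To Ti d P X i w (n + 1) = dmor To P X n (n + 1)) ∧
    -- para-cocyclic compatibility with the codegeneracies
    (∀ n j : ℕ, 1 ≤ j → j ≤ n →
      smor To P X n j ≫ wmor To Ti d P X i w n =
        wmor To Ti d P X i w (n + 1) ≫ smor To P X n (j - 1)) ∧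
    (∀ n : ℕ,
      smor To P X n 0 ≫ wmor To Ti d P X i w n =
        wmor To Ti d P X i w (n + 1) ≫ wmor To Ti d P X i w (n + 1) ≫
          smor To P X n n) :=
  ⟨dmor_comp_dmor To P X, smor_comp_smor To P X, dmor_comp_smor_of_lt To P X,
    fun n k _ => ⟨dmor_comp_smor To P X n k, dmor_succ_comp_smor To P X n k⟩,
    dmor_comp_smor_of_gt To P X, dmor_comp_wmor To Ti d P X i w,
    dmor_zero_comp_wmor To Ti d P X i w hi_unit hw_unit,
    smor_comp_wmor To Ti d P X i w, smor_zero_comp_wmor To Ti d P X i w hi_mul hw_mul⟩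
end
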